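/- arXiv:1903.09134 — 4 statements merged into one kernel-verified Lean document; each statement's English description precedes it below -/
import Mathlib

section
/- Let (K,v) be a henselian valued field, g ∈ K[x] monic and irreducible but inseparable, and π ∈ K* nonzero. Then the polynomial g_sep = g + πx has the same degree as g, is separable, and for any root β of g there exists a root α of g_sep with v(β − α) > ρ, provided v(π) > deg(g)·ρ − v(β). -/
/-!
As `g` is irreducible and inseparable, `g' = 0`; hence `deg g ≥ 2`, so adding `π X` keeps the
degree, and `(g + π X)' = π` is a unit, so `g + π X` is separable. Over the algebraic closure,
`g + π X = ∏ (X - α)` with `deg g` roots, and evaluating at the root `β` of `g` gives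
`∑_α v(β - α) = v(π β) > deg g · ρ`, so some summand exceeds `ρ`.
-/

open Polynomial

noncomputable section

variable {K L Γ : Type*} [Field K] [Field L] [Algebra K L] [IsAlgClosure K L]
  [AddCommGroup Γ] [LinearOrder Γ] [IsOrderedAddMonoid Γ]

/-- The degree of an algebraic element over `K`: the degree of its minimal polynomial. -/
def degK (K : Type*) [Field K] {L : Type*} [Field L] [Algebra K L] (β : L) : ℕ :=
  (minpoly K β).natDegree

/-- The ring of integers of an additive valuation on a field, as a valuation subring.
A valued field `(K,v)` is henselian iff this local ring is henselian. -/
def AddValuation.integersVSR {Γ : Type*} [AddCommGroup Γ] [LinearOrder Γ] [IsOrderedAddMonoid Γ] {F : Type*} [Field F]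
    (v : AddValuation F (WithTop Γ)) : ValuationSubring F where
  carrier := {x | 0 ≤ v x}
  mul_mem' := by
    intro a b ha hb
    show (0 : WithTop Γ) ≤ v (a * b)
    rw [v.map_mul]
    calc (0 : WithTop Γ) = 0 + 0 := by simp
    _ ≤ v a + v b := add_le_add ha hb
  one_mem' := by simp [Set.mem_setOf_eq, v.map_one]
  add_mem' := by
    intro a b ha hb
    exact le_trans (le_min ha hb) (v.map_add a b)
  zero_mem' := by simp [Set.mem_setOf_eq, v.map_zero]
  neg_mem' := by
    intro a ha
    simpa [Set.mem_setOf_eq, v.map_neg] using ha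
  mem_or_inv_mem' := by
    intro x
    rcases le_total 0 (v x) with h | h
    · exact Or.inl h
    · right
      show (0 : WithTop Γ) ≤ v x⁻¹
      rcases eq_or_ne x 0 with rfl | hx
      · simp [v.map_zero]
      · by_contra h'
        push_neg at h'
        have h1 : v (x * x⁻¹) = v x + v x⁻¹ := v.map_mul x x⁻¹
        rw [mul_inv_cancel₀ hx, v.map_one] at h1
        have h2 : v x + v x⁻¹ ≤ 0 + v x⁻¹ := add_le_add_left h (v x⁻¹)
        rw [zero_add] at h2
        exact absurd (h1 ▸ h2) (not_le.mpr h')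

theorem AddValuation.map_multiset_prod {R Γ₀ : Type*} [CommRing R]
    [LinearOrderedAddCommMonoidWithTop Γ₀] (v : AddValuation R Γ₀) (s : Multiset R) :
    v s.prod = (s.map v).sum := by
  induction s using Multiset.induction with
  | empty => simp
  | cons a s ih => simp [v.map_mul, ih]

namespace Polynomial

theorem one_lt_natDegree_of_derivative_eq_zero {R : Type*} [Semiring R] {p : R[X]}
    (hp : 0 < p.natDegree) (hd : derivative p = 0) : 1 < p.natDegree := by
  by_contra hle
  have hone : p.natDegree = 1 := by omega
  have hcoeff : (derivative p).coeff 0 = p.leadingCoeff := by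
    simp [coeff_derivative, leadingCoeff, hone]
  rw [hd, coeff_zero, eq_comm, leadingCoeff_eq_zero] at hcoeff
  simp [hcoeff] at hp

theorem degree_C_mul_X_lt {R : Type*} [Semiring R] {p : R[X]} (hp : 1 < p.natDegree) (a : R) :
    (C a * X).degree < p.degree :=
  (degree_C_mul_X_le a).trans_lt <| by
    rw [degree_eq_natDegree (ne_zero_of_natDegree_gt hp)]
    exact_mod_cast hp

theorem separable_add_C_mul_X {R : Type*} [CommRing R] {p : R[X]} (hd : derivative p = 0)
    {a : R} (ha : IsUnit a) : (p + C a * X).Separable := by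
  have hderiv : derivative (p + C a * X) = C a := by simp [hd]
  rw [Separable, hderiv]
  exact ⟨0, ↑(ha.map C).unit⁻¹, by simp⟩

variable {R A Γ₀ : Type*} [CommRing R] [CommRing A] [IsDomain A] [Algebra R A]
  [LinearOrderedAddCommMonoidWithTop Γ₀] (v : AddValuation A Γ₀)
  {p : R[X]} (hp : p.Monic) (hsplit : (p.map (algebraMap R A)).Splits)
include hp hsplit

theorem Monic.addValuation_aeval_eq_sum (β : A) :
    v (aeval β p) = ((p.aroots A).map fun a ↦ v (β - a)).sum := by
  rw [hsplit.aeval_eq_prod_aroots_of_monic hp, v.map_multiset_prod, Multiset.map_map]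
  rfl

theorem Monic.exists_mem_aroots_lt_addValuation_sub {β : A} {ρ : Γ₀}
    (h : p.natDegree • ρ < v (aeval β p)) : ∃ a ∈ p.aroots A, ρ < v (β - a) := by
  by_contra! hle
  have hcard : (p.aroots A).card = p.natDegree := by
    rw [aroots, ← hsplit.natDegree_eq_card_roots, hp.natDegree_map]
  have hsum := Multiset.sum_le_card_nsmul ((p.aroots A).map fun a ↦ v (β - a)) ρ <| by
    simpa only [Multiset.mem_map, forall_exists_index, and_imp, forall_apply_eq_imp_iff₂]
  rw [Multiset.card_map, hcard, ← hp.addValuation_aeval_eq_sum v hsplit] at hsum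
  exact hsum.not_gt h

end Polynomial

theorem separable_perturbation_general (w : AddValuation L (WithTop Γ))
    (g : Polynomial K) (hg : g.Monic) (hgi : Irreducible g) (hgins : ¬ g.Separable)
    (π : K) (hπ : π ≠ 0) (ρ : Γ) (β : L) (hβ : (aeval β) g = 0)
    (hval : g.natDegree • (ρ : WithTop Γ) < w (algebraMap K L π) + w β) :
    (g + Polynomial.C π * Polynomial.X).natDegree = g.natDegree ∧
      (g + Polynomial.C π * Polynomial.X).Separable ∧
      ∃ a ∈ (g + Polynomial.C π * Polynomial.X).aroots L, (ρ : WithTop Γ) < w (β - a) := by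
  have hder : derivative g = 0 := by
    by_contra hne
    exact hgins ((separable_iff_derivative_ne_zero hgi).mpr hne)
  have hlt : (C π * X).degree < g.degree :=
    degree_C_mul_X_lt (one_lt_natDegree_of_derivative_eq_zero hgi.natDegree_pos hder) π
  have hdeg : (g + C π * X).natDegree = g.natDegree := natDegree_add_eq_left_of_degree_lt hlt
  refine ⟨hdeg, separable_add_C_mul_X hder hπ.isUnit, ?_⟩
  have : IsAlgClosed L := IsAlgClosure.isAlgClosed K
  refine (hg.add_of_left hlt).exists_mem_aroots_lt_addValuation_sub w (IsAlgClosed.splits _) ?_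
  rwa [hdeg, map_add, hβ, zero_add, map_mul, aeval_C, aeval_X, w.map_mul]

/-- perturbing an inseparable irreducible monic polynomial `g` to `g + π·X`. -/
theorem separable_perturbation (w : AddValuation L (WithTop Γ))
    [HenselianLocalRing (AddValuation.integersVSR (w.comap (algebraMap K L)))]
    (g : Polynomial K) (hg : g.Monic) (hgi : Irreducible g) (hgins : ¬ g.Separable)
    (π : K) (hπ : π ≠ 0) (ρ : Γ) (β : L) (hβ : (aeval β) g = 0)
    (hval : g.natDegree • (ρ : WithTop Γ) < w (algebraMap K L π) + w β) :
    (g + Polynomial.C π * Polynomial.X).natDegree = g.natDegree ∧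
      (g + Polynomial.C π * Polynomial.X).Separable ∧
      ∃ a ∈ (g + Polynomial.C π * Polynomial.X).aroots L, (ρ : WithTop Γ) < w (β - a) :=
  separable_perturbation_general w g hg hgi hgins π hπ ρ β hβ hval
end
end

section
/- Let (K,v) be a henselian valued field and θ, α, β ∈ K̄ separable over K lying in a finite Galois extension M/K with group G. If (α,θ) is a distinguished pair with δ = v(θ−α), and v(θ−β) ≥ δ, then for every σ ∈ G, v(θ − σ(β)) ≥ v(θ − σ(α)); consequently v(g(θ))/deg(g) ≥ v(φ(θ))/deg(φ) where g, φ are the minimal polynomials of β, α over K. -/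
/-
Over a henselian base, Hensel's lemma applied to the suitably rescaled minimal polynomial shows
that an element whose value is strictly smaller than that of all its other conjugates lies in `K`.
Applying this to the product `u` of the conjugates of minimal value of `x` (an automorphism moving
one of them out strictly increases the value of `u`) shows that all conjugates of `x` have the
same value, so `w ∘ σ = w` on the Galois extension `M`.

For `σ ∈ Gal(M/K)` the conjugate `σ a` has the degree of `a`, hence
`w(θ - σa) ≤ w(θ - a) = w(σθ - σa) ≤ w(θ - β) = w(σθ - σβ)`, and the ultrametric inequality gives
`w(θ - σa) ≤ w(θ - σβ)`. Summing over `Gal(M/K)`, where `σ ↦ σ c` hits every root of the minimal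
polynomial of `c` equally often, turns this into the inequality between the values of the minimal
polynomials at `θ`.
-/

open Polynomial

noncomputable section

variable {K L Γ : Type*} [Field K] [Field L] [Algebra K L] [IsAlgClosure K L]
  [AddCommGroup Γ] [LinearOrder Γ] [IsOrderedAddMonoid Γ]

/-- `(α, θ)` is a distinguished pair of algebraic elements over `K`:
`deg_K α < deg_K θ`, `v(θ-α)` is the maximum of `Δ(θ) = {v(θ-β) : deg_K β < deg_K θ}`,
and elements of degree smaller than `deg_K α` give a strictly smaller value. -/
def IsDistinguishedPair (K : Type*) [Field K] {L Γ : Type*} [Field L] [Algebra K L]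
    [AddCommGroup Γ] [LinearOrder Γ] [IsOrderedAddMonoid Γ] (w : AddValuation L (WithTop Γ)) (α θ : L) : Prop :=
  degK K α < degK K θ ∧
  IsGreatest {x : WithTop Γ | ∃ β : L, degK K β < degK K θ ∧ x = w (θ - β)} (w (θ - α)) ∧
  ∀ β : L, degK K β < degK K α → w (θ - β) < w (θ - α)

theorem WithTop.le_of_nsmul_le_nsmul {Γ : Type*} [AddCommMonoid Γ] [LinearOrder Γ]
    [IsOrderedCancelAddMonoid Γ] {n : ℕ} (hn : n ≠ 0) {x y : WithTop Γ} (h : n • x ≤ n • y) :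
    x ≤ y := by
  contrapose! h
  lift y to Γ using h.ne_top
  rw [← WithTop.coe_nsmul]
  induction x with
  | top =>
    obtain ⟨k, rfl⟩ := Nat.exists_eq_succ_of_ne_zero hn
    rw [succ_nsmul (⊤ : WithTop Γ) k, WithTop.add_top]
    exact WithTop.coe_lt_top _
  | coe x =>
    rw [← WithTop.coe_nsmul, WithTop.coe_lt_coe] at *
    exact nsmul_lt_nsmul_right hn h

theorem WithTop.sum_lt_sum_of_ne_top {ι Γ : Type*} [AddCommMonoid Γ] [LinearOrder Γ]
    [IsOrderedCancelAddMonoid Γ] {s : Finset ι} {f g : ι → WithTop Γ}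
    (hf : ∀ i ∈ s, f i ≠ ⊤) (hle : ∀ i ∈ s, f i ≤ g i) (hlt : ∃ i ∈ s, f i < g i) :
    ∑ i ∈ s, f i < ∑ i ∈ s, g i := by
  classical
  obtain ⟨i, hi, hfg⟩ := hlt
  rw [← Finset.add_sum_erase s f hi, ← Finset.add_sum_erase s g hi]
  exact WithTop.add_lt_add_of_lt_of_le
    (WithTop.sum_ne_top.2 fun j hj => hf j (Finset.mem_of_mem_erase hj)) hfg
    (Finset.sum_le_sum fun j hj => hle j (Finset.mem_of_mem_erase hj))

theorem MulAction.sum_smul_eq_card_stabilizer_nsmul {G X M : Type*} [Group G] [Fintype G]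
    [MulAction G X] [DecidableEq X] [AddCommMonoid M] (h : X → M) (x : X) :
    ∑ g : G, h (g • x) =
      Nat.card (stabilizer G x) • ∑ y ∈ Finset.univ.image (fun g : G => g • x), h y := by
  rw [Finset.sum_comp, Finset.smul_sum]
  refine Finset.sum_congr rfl fun y hy => ?_
  obtain ⟨g₀, -, rfl⟩ := Finset.mem_image.1 hy
  congr 1
  rw [← Fintype.card_subtype, ← Nat.card_eq_fintype_card]
  exact Nat.card_congr
    { toFun := fun g => ⟨g₀⁻¹ * g, by simp [mem_stabilizer_iff, mul_smul, g.2]⟩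
      invFun := fun s => ⟨g₀ * s, by simp [mul_smul, mem_stabilizer_iff.1 s.2]⟩
      left_inv := fun g => by simp
      right_inv := fun s => by simp }

namespace AddValuation

section Basic

variable {R Γ₀ : Type*} [LinearOrderedAddCommMonoidWithTop Γ₀]

theorem map_prod [CommRing R] (v : AddValuation R Γ₀) {ι : Type*} (s : Finset ι) (f : ι → R) :
    v (∏ i ∈ s, f i) = ∑ i ∈ s, v (f i) := by
  classical
  induction s using Finset.induction_on with
  | empty => simp
  | insert i s hi ih => rw [Finset.prod_insert hi, Finset.sum_insert hi, map_mul, ih]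

theorem map_sub_le_map_sub_of_le_of_le [Ring R] (v : AddValuation R Γ₀) {x y z t : R}
    (h₁ : v (x - z) ≤ v (y - z)) (h₂ : v (y - z) ≤ v (y - t)) : v (x - z) ≤ v (x - t) := by
  have h₃ : v (x - z) ≤ v ((y - t) - (y - z)) :=
    h₁.trans ((le_min h₂ le_rfl).trans (v.map_sub _ _))
  calc v (x - z) ≤ min (v (x - z)) (v ((y - t) - (y - z))) := le_min le_rfl h₃
    _ ≤ v (x - t) := by
      convert v.map_add (x - z) ((y - t) - (y - z)) using 2
      abel

end Basic

variable {F Γ : Type*} [Field F] [AddCommGroup Γ] [LinearOrder Γ] [IsOrderedAddMonoid Γ]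
  (v : AddValuation F (WithTop Γ))

theorem map_sub_one_eq_zero_of_pos {x : F} (hx : 0 < v x) : v (1 - x) = 0 := by
  rw [map_sub_eq_of_lt_left v (by rwa [map_one]), map_one]

theorem pos_map_div_iff {x y : F} (hy : y ≠ 0) : 0 < v (x / y) ↔ v y < v x := by
  rw [map_div, LinearOrderedAddCommGroupWithTop.sub_pos, or_iff_left ((v.ne_top_iff).2 hy)]

theorem coeff_prod_X_sub_C_nonneg (s : Finset F) (hs : ∀ y ∈ s, 0 ≤ v y) (n : ℕ) :
    0 ≤ v ((∏ y ∈ s, (X - C y)).coeff n) := by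
  have hmem : ∏ y ∈ s, (X - C y) ∈ liftsRing (algebraMap v.integersVSR F) :=
    prod_mem fun y hy => sub_mem ((lifts_iff_liftsRing _ _).1 (X_mem_lifts _))
      ((lifts_iff_liftsRing _ _).1 (C_mem_lifts _ (⟨y, hs y hy⟩ : v.integersVSR)))
  obtain ⟨c, hc⟩ := (lifts_iff_coeff_lifts _).1 ((lifts_iff_liftsRing _ _).2 hmem) n
  exact hc ▸ c.2

theorem isUnit_integersVSR_iff (x : v.integersVSR) : IsUnit x ↔ v x = 0 := by
  have hx : 0 ≤ v x := x.2
  refine ⟨fun ⟨u, hu⟩ => ?_, fun h => ?_⟩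
  · have hinv : 0 ≤ v ((u⁻¹ : (v.integersVSR)ˣ) : F) := (u⁻¹ : (v.integersVSR)ˣ).val.2
    have hmul : (x : F) * ((u⁻¹ : (v.integersVSR)ˣ) : F) = 1 := by
      rw [← hu]
      exact_mod_cast congrArg Subtype.val u.mul_inv
    have hsum : v x + v ((u⁻¹ : (v.integersVSR)ˣ) : F) = 0 := by rw [← map_mul, hmul, map_one]
    exact le_antisymm (hsum ▸ le_add_of_nonneg_right hinv) hx
  · have hx0 : (x : F) ≠ 0 := by
      rintro h0
      simp [h0] at h
    refine isUnit_iff_exists_inv.2 ⟨⟨(x : F)⁻¹, ?_⟩, Subtype.ext (mul_inv_cancel₀ hx0)⟩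
    show 0 ≤ v (x : F)⁻¹
    rw [map_inv, h, neg_zero]

theorem mem_maximalIdeal_integersVSR_iff (x : v.integersVSR) :
    x ∈ IsLocalRing.maximalIdeal v.integersVSR ↔ 0 < v x := by
  rw [IsLocalRing.mem_maximalIdeal, mem_nonunits_iff, isUnit_integersVSR_iff]
  exact (x.2 : 0 ≤ v x).lt_iff_ne'.symm

theorem exists_isRoot_of_henselian [HenselianLocalRing v.integersVSR] {f : F[X]} (hf : f.Monic)
    (hcoeff : ∀ n, 0 ≤ v (f.coeff n)) {a : F} (ha : 0 ≤ v a) (hfa : 0 < v (f.eval a))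
    (hf'a : v (f.derivative.eval a) = 0) : ∃ b, f.IsRoot b := by
  have hlifts : f ∈ lifts (algebraMap v.integersVSR F) :=
    (lifts_iff_coeff_lifts f).2 fun n => ⟨⟨f.coeff n, hcoeff n⟩, rfl⟩
  obtain ⟨f₀, rfl, -, hf₀⟩ := lifts_and_natDegree_eq_and_monic hlifts hf
  let a₀ : v.integersVSR := ⟨a, ha⟩
  have heval : ∀ g : v.integersVSR[X],
      (g.map (algebraMap v.integersVSR F)).eval a = ((g.eval a₀ : v.integersVSR) : F) :=
    fun g => eval_map_apply (algebraMap v.integersVSR F) a₀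
  obtain ⟨b, hb, -⟩ := HenselianLocalRing.is_henselian f₀ hf₀ a₀
    (by rw [mem_maximalIdeal_integersVSR_iff, ← heval]; exact hfa)
    (by rw [isUnit_integersVSR_iff, ← heval, ← derivative_map]; exact hf'a)
  exact ⟨algebraMap v.integersVSR F b, by rw [IsRoot, eval_map_apply, hb.eq_zero, _root_.map_zero]⟩

end AddValuation

section Conjugates

variable (K : Type*) {L : Type*} [Field K] [Field L] [Algebra K L] [DecidableEq L]

def conjugates (x : L) : Finset L :=
  ((minpoly K x).aroots L).toFinset

variable {K}

theorem mem_conjugates {x y : L} (hx : IsIntegral K x) :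
    y ∈ conjugates K x ↔ IsConjRoot K x y := by
  rw [conjugates, Multiset.mem_toFinset, isConjRoot_iff_mem_minpoly_aroots hx]

theorem self_mem_conjugates {x : L} (hx : IsIntegral K x) : x ∈ conjugates K x :=
  (mem_conjugates hx).2 IsConjRoot.refl

theorem minpoly_map_eq_prod_conjugates [Normal K L] {x : L} (hx : IsSeparable K x) :
    (minpoly K x).map (algebraMap K L) = ∏ y ∈ conjugates K x, (X - C y) := by
  have hnodup : ((minpoly K x).aroots L).Nodup := nodup_roots (Separable.map hx)
  rw [(Normal.splits inferInstance x).eq_prod_roots_of_monic ((minpoly.monic hx.isIntegral).map _),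
    Finset.prod_eq_multiset_prod, conjugates, Multiset.toFinset_val, hnodup.dedup, aroots_def]

theorem card_conjugates [Normal K L] {x : L} (hx : IsSeparable K x) :
    (conjugates K x).card = (minpoly K x).natDegree := by
  rw [← natDegree_map (algebraMap K L), minpoly_map_eq_prod_conjugates hx,
    natDegree_finsetProd_X_sub_C_eq_card]

theorem image_algEquiv_apply_eq_conjugates [Normal K L] [Fintype (L ≃ₐ[K] L)] (c : L) :
    Finset.univ.image (fun σ : L ≃ₐ[K] L => σ c) = conjugates K c := by
  ext y
  simp only [Finset.mem_image, Finset.mem_univ, true_and,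
    mem_conjugates (Algebra.IsIntegral.isIntegral c)]
  exact ⟨fun ⟨σ, hσ⟩ => hσ ▸ isConjRoot_of_algEquiv c σ, fun h => h.symm.exists_algEquiv⟩

end Conjugates

section Henselian

variable {K L Γ : Type*} [Field K] [Field L] [Algebra K L] [Normal K L]
  [AddCommGroup Γ] [LinearOrder Γ] [IsOrderedAddMonoid Γ] (w : AddValuation L (WithTop Γ))
  [HenselianLocalRing (w.comap (algebraMap K L)).integersVSR]

theorem mem_range_of_map_sub_one_pos [DecidableEq L] {x : L} (hsep : IsSeparable K x)
    (hx : 0 < w (x - 1)) (hconj : ∀ y ∈ conjugates K x, y ≠ x → 0 < w y) :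
    x ∈ (algebraMap K L).range := by
  have hint := hsep.isIntegral
  set R := conjugates K x
  have hxR : x ∈ R := self_mem_conjugates hint
  have hwx : w x = 0 := by
    rw [w.map_eq_of_lt_sub (by rwa [AddValuation.map_one]), AddValuation.map_one]
  have hx' : 0 < w (1 - x) := by rwa [w.map_sub_swap]
  have hprod_x : w (∏ y ∈ R.erase x, (1 - y)) = 0 := by
    rw [AddValuation.map_prod]
    exact Finset.sum_eq_zero fun y hy => w.map_sub_one_eq_zero_of_pos
      (hconj y (Finset.mem_of_mem_erase hy) (Finset.ne_of_mem_erase hy))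
  have hprod_ne : ∀ a ∈ R, a ≠ x → w (∏ y ∈ R.erase a, (1 - y)) = w (1 - x) := by
    intro a _ hax
    rw [AddValuation.map_prod]
    refine Finset.sum_eq_single_of_mem x (Finset.mem_erase.2 ⟨hax.symm, hxR⟩) fun y hy hyx => ?_
    exact w.map_sub_one_eq_zero_of_pos (hconj y (Finset.mem_of_mem_erase hy) hyx)
  have hmap := minpoly_map_eq_prod_conjugates hsep
  have hv : ∀ a, w.comap (algebraMap K L) a = w (algebraMap K L a) := fun _ => rfl
  have hcoeff : ∀ n, 0 ≤ w.comap (algebraMap K L) ((minpoly K x).coeff n) := by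
    intro n
    rw [hv, ← coeff_map, hmap]
    refine w.coeff_prod_X_sub_C_nonneg R (fun y hy => ?_) n
    by_cases hyx : y = x
    · exact (hyx ▸ hwx).ge
    · exact (hconj y hy hyx).le
  have heval : w.comap (algebraMap K L) ((minpoly K x).eval 1) = w (1 - x) := by
    rw [hv, ← eval_map_apply, map_one, hmap, eval_prod]
    simp only [eval_sub, eval_X, eval_C]
    rw [AddValuation.map_prod, Finset.sum_eq_single_of_mem x hxR fun y hy hyx =>
      w.map_sub_one_eq_zero_of_pos (hconj y hy hyx)]
  have hderiv : w.comap (algebraMap K L) ((minpoly K x).derivative.eval 1) = 0 := by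
    rw [hv, ← eval_map_apply, map_one, ← derivative_map, hmap,
      derivative_prod_finset, eval_finsetSum, ← Finset.add_sum_erase R _ hxR]
    simp only [derivative_X_sub_C, mul_one, eval_prod, eval_sub, eval_X, eval_C]
    have hrest : w (∏ y ∈ R.erase x, (1 - y)) <
        w (∑ a ∈ R.erase x, ∏ y ∈ R.erase a, (1 - y)) :=
      hprod_x ▸ w.map_lt_sum WithTop.zero_ne_top fun a ha =>
        hprod_ne a (Finset.mem_of_mem_erase ha) (Finset.ne_of_mem_erase ha) ▸ hx'
    rw [w.map_add_eq_of_lt_left hrest, hprod_x]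
  obtain ⟨b, hb⟩ := (w.comap (algebraMap K L)).exists_isRoot_of_henselian (minpoly.monic hint)
    hcoeff (a := 1) (by rw [AddValuation.map_one]) (heval ▸ hx') hderiv
  exact minpoly.natDegree_eq_one_iff.1 <| natDegree_eq_of_degree_eq_some <|
    degree_eq_one_of_irreducible_of_root (minpoly.irreducible hint) hb

theorem mem_range_of_map_lt_map_conjugates [DecidableEq L] {x : L} (hsep : IsSeparable K x)
    (hlt : ∀ y ∈ conjugates K x, y ≠ x → w x < w y) : x ∈ (algebraMap K L).range := by
  have hint := hsep.isIntegral
  by_cases hx0 : x = 0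
  · exact hx0 ▸ zero_mem _
  set R := conjugates K x
  have hxR : x ∈ R := self_mem_conjugates hint
  obtain ⟨k, hk⟩ : ∑ y ∈ R, y ∈ (algebraMap K L).range :=
    ⟨-(minpoly K x).nextCoeff, by rw [map_neg, ← nextCoeff_map (algebraMap K L).injective,
      minpoly_map_eq_prod_conjugates hsep, prod_X_sub_C_nextCoeff, neg_neg]⟩
  have hrest : w x < w (∑ y ∈ R.erase x, y) :=
    w.map_lt_sum (w.ne_top_iff.2 hx0) fun y hy =>
      hlt y (Finset.mem_of_mem_erase hy) (Finset.ne_of_mem_erase hy)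
  have hsplit : algebraMap K L k = x + ∑ y ∈ R.erase x, y := by
    rw [hk, Finset.add_sum_erase R (fun y => y) hxR]
  have hwk : w (algebraMap K L k) = w x := hsplit ▸ w.map_add_eq_of_lt_left hrest
  have hk0 : algebraMap K L k ≠ 0 := w.ne_top_iff.1 (hwk ▸ w.ne_top_iff.2 hx0)
  -- dividing by the sum of the conjugates puts `x` next to `1` and its other conjugates near `0`
  suffices x / algebraMap K L k ∈ (algebraMap K L).range by
    obtain ⟨t, ht⟩ := this
    exact ⟨t * k, by rw [map_mul, ht, div_mul_cancel₀ x hk0]⟩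
  have hsep' : IsSeparable K (x / algebraMap K L k) := by
    rw [div_eq_mul_inv, ← map_inv₀]
    exact Field.isSeparable_mul hsep (isSeparable_algebraMap _)
  refine mem_range_of_map_sub_one_pos w hsep' ?_ fun y hy hyne => ?_
  · rw [div_sub_one hk0, w.pos_map_div_iff hk0, hsplit, sub_add_cancel_left, w.map_neg, ← hsplit,
      hwk]
    exact hrest
  · obtain ⟨σ, hσ⟩ := ((mem_conjugates hsep'.isIntegral).1 hy).symm.exists_algEquiv
    have hy' : y = σ x / algebraMap K L k := by rw [← hσ, map_div₀, AlgEquiv.commutes]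
    rw [hy', w.pos_map_div_iff hk0, hwk]
    exact hlt (σ x) ((mem_conjugates hint).2 (isConjRoot_of_algEquiv x σ))
      fun h => hyne (by rw [hy', h])

theorem map_algEquiv_of_isSeparable {x : L} (hsep : IsSeparable K x) (τ : L ≃ₐ[K] L) :
    w (τ x) = w x := by
  classical
  have hint := hsep.isIntegral
  by_cases hx0 : x = 0
  · simp [hx0]
  set R := conjugates K x
  have hR : ∀ σ : L ≃ₐ[K] L, ∀ y ∈ R, σ y ∈ R := fun σ y hy =>
    (mem_conjugates hint).2 (((mem_conjugates hint).1 hy).trans (isConjRoot_of_algEquiv y σ))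
  obtain ⟨s₀, hs₀R, hmin⟩ := R.exists_min_image w ⟨x, self_mem_conjugates hint⟩
  have hs₀top : w s₀ ≠ ⊤ := w.ne_top_iff.2 (((mem_conjugates hint).1 hs₀R).ne_zero hx0)
  set S := R.filter (fun y => w y = w s₀)
  set u := ∏ s ∈ S, s with hu
  have hS : ∀ {y}, y ∈ S ↔ y ∈ R ∧ w y = w s₀ := Finset.mem_filter
  have hmove : ∀ σ : L ≃ₐ[K] L, (∃ s ∈ S, σ s ∉ S) → w u < w (σ u) := by
    rintro σ ⟨s₁, hs₁, hσs₁⟩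
    rw [hu, map_prod σ, w.map_prod, w.map_prod]
    refine WithTop.sum_lt_sum_of_ne_top (fun s hs => (hS.1 hs).2 ▸ hs₀top)
      (fun s hs => (hS.1 hs).2 ▸ hmin _ (hR σ s (hS.1 hs).1)) ⟨s₁, hs₁, ?_⟩
    rw [(hS.1 hs₁).2]
    exact (hmin _ (hR σ s₁ (hS.1 hs₁).1)).lt_of_ne
      fun h => hσs₁ (hS.2 ⟨hR σ s₁ (hS.1 hs₁).1, h.symm⟩)
  have hfix : ∀ σ : L ≃ₐ[K] L, (∀ s ∈ S, σ s ∈ S) → σ u = u := by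
    intro σ hσ
    have himage : S.image σ = S := Finset.eq_of_subset_of_card_le
      (Finset.image_subset_iff.2 hσ) (Finset.card_image_of_injective S σ.injective).ge
    rw [hu, map_prod σ, ← Finset.prod_image (f := fun y => y) fun a _ b _ h => σ.injective h,
      himage]
  have husep : IsSeparable K u :=
    Finset.prod_induction _ _ (fun _ _ => Field.isSeparable_mul)
      (by simpa using isSeparable_algebraMap (K := L) (1 : K))
      fun s hs => by
        rw [IsSeparable, ← isConjRoot_def.1 ((mem_conjugates hint).1 (hS.1 hs).1)]
        exact hsep
  obtain ⟨k, hk⟩ : u ∈ (algebraMap K L).range :=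
    mem_range_of_map_lt_map_conjugates w husep fun y hy hyu => by
      obtain ⟨σ, rfl⟩ := ((mem_conjugates husep.isIntegral).1 hy).symm.exists_algEquiv
      refine hmove σ ?_
      by_contra! h
      exact hyu (hfix σ h)
  have hS_stable : ∀ σ : L ≃ₐ[K] L, ∀ s ∈ S, σ s ∈ S := by
    intro σ
    by_contra! h
    have := hmove σ h
    rw [← hk, AlgEquiv.commutes] at this
    exact lt_irrefl _ this
  have hval : ∀ σ : L ≃ₐ[K] L, w (σ s₀) = w s₀ := fun σ =>
    (hS.1 (hS_stable σ s₀ (hS.2 ⟨hs₀R, rfl⟩))).2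
  obtain ⟨σ, rfl⟩ := ((mem_conjugates hint).1 hs₀R).exists_algEquiv
  rw [← AlgEquiv.trans_apply, hval, hval]

theorem map_algEquiv_apply_of_isGalois (M : IntermediateField K L) [IsGalois K M]
    (σ : M ≃ₐ[K] M) (z : M) : w (σ z : L) = w (z : L) := by
  have hsep : IsSeparable K (z : L) :=
    (Algebra.IsSeparable.isSeparable K z).map M.val Subtype.val_injective
  have hconj : IsConjRoot K (σ z : L) (z : L) :=
    (isConjRoot_algHom_iff_of_injective (f := M.val) Subtype.val_injective).2
      (isConjRoot_of_algEquiv z σ).symm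
  obtain ⟨τ, hτ⟩ := hconj.exists_algEquiv
  rw [← hτ, map_algEquiv_of_isSeparable w hsep]

end Henselian

theorem natDegree_nsmul_sum_map_sub_algEquiv {K L Γ₀ : Type*} [Field K] [Field L] [Algebra K L]
    [LinearOrderedAddCommMonoidWithTop Γ₀] (w : AddValuation L Γ₀) (M : IntermediateField K L)
    [FiniteDimensional K M] [IsGalois K M] (θ : L) (c : M) :
    (minpoly K (c : L)).natDegree • ∑ σ : M ≃ₐ[K] M, w (θ - σ c) =
      Fintype.card (M ≃ₐ[K] M) • w (aeval θ (minpoly K (c : L))) := by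
  classical
  have hsep : IsSeparable K c := Algebra.IsSeparable.isSeparable K c
  have hsum := MulAction.sum_smul_eq_card_stabilizer_nsmul (G := M ≃ₐ[K] M)
    (fun y : M => w (θ - y)) c
  have hcard := MulAction.sum_smul_eq_card_stabilizer_nsmul (G := M ≃ₐ[K] M) (fun _ : M => 1) c
  simp only [AlgEquiv.smul_def, image_algEquiv_apply_eq_conjugates] at hsum hcard
  simp only [Finset.sum_const, Finset.card_univ, smul_eq_mul, mul_one] at hcard
  have hprod : aeval θ (minpoly K (c : L)) = ∏ y ∈ conjugates K c, (θ - y) := by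
    rw [← IntermediateField.minpoly_eq, aeval_def, ← eval_map, IsScalarTower.algebraMap_eq K M L,
      ← map_map, minpoly_map_eq_prod_conjugates hsep, Polynomial.map_prod, eval_prod]
    simp
  rw [hsum, hcard, hprod, w.map_prod, ← IntermediateField.minpoly_eq, ← card_conjugates hsep,
    smul_smul, mul_comm]

theorem conjugate_value_comparison_general (w : AddValuation L (WithTop Γ))
    [HenselianLocalRing (AddValuation.integersVSR (w.comap (algebraMap K L)))]
    (M : IntermediateField K L) [FiniteDimensional K M] [IsGalois K M]
    (θ a β : L) (hθM : θ ∈ M) (haM : a ∈ M) (hβM : β ∈ M)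
    (hpair : IsDistinguishedPair K w a θ)
    (hβ : w (θ - a) ≤ w (θ - β)) :
    (∀ σ : M ≃ₐ[K] M, w (θ - ((σ ⟨a, haM⟩ : M) : L)) ≤ w (θ - ((σ ⟨β, hβM⟩ : M) : L))) ∧
      (minpoly K β).natDegree • w ((aeval θ) (minpoly K a))
        ≤ (minpoly K a).natDegree • w ((aeval θ) (minpoly K β)) := by
  have hsub (σ : M ≃ₐ[K] M) (y z : M) : w ((σ y : L) - σ z) = w ((y : L) - z) := by
    simpa using map_algEquiv_apply_of_isGalois w M σ (y - z)
  have hdeg (σ : M ≃ₐ[K] M) : degK K ((σ ⟨a, haM⟩ : M) : L) = degK K a := by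
    rw [degK, degK, ← IntermediateField.minpoly_eq, minpoly.algEquiv_eq,
      IntermediateField.minpoly_eq]
  have hcomp (σ : M ≃ₐ[K] M) : w (θ - σ ⟨a, haM⟩) ≤ w (θ - σ ⟨β, hβM⟩) := by
    refine w.map_sub_le_map_sub_of_le_of_le (y := (σ ⟨θ, hθM⟩ : L)) ?_ ?_
    · rw [hsub]
      exact hpair.2.1.2 ⟨_, (hdeg σ).trans_lt hpair.1, rfl⟩
    · rw [hsub, hsub]
      exact hβ
  refine ⟨hcomp, WithTop.le_of_nsmul_le_nsmul (Fintype.card_ne_zero (α := M ≃ₐ[K] M)) ?_⟩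
  have hsum_a := natDegree_nsmul_sum_map_sub_algEquiv w M θ ⟨a, haM⟩
  have hsum_b := natDegree_nsmul_sum_map_sub_algEquiv w M θ ⟨β, hβM⟩
  simp only at hsum_a hsum_b
  set m := (minpoly K β).natDegree
  set n := (minpoly K a).natDegree
  calc Fintype.card (M ≃ₐ[K] M) • m • w (aeval θ (minpoly K a))
      = m • n • ∑ σ : M ≃ₐ[K] M, w (θ - σ ⟨a, haM⟩) := by rw [smul_comm, hsum_a]
    _ ≤ m • n • ∑ σ : M ≃ₐ[K] M, w (θ - σ ⟨β, hβM⟩) :=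
      nsmul_le_nsmul_right (nsmul_le_nsmul_right (Finset.sum_le_sum fun σ _ => hcomp σ) n) m
    _ = Fintype.card (M ≃ₐ[K] M) • n • w (aeval θ (minpoly K β)) := by
      rw [smul_comm m n, hsum_b, smul_comm]

/-- comparison of values at Galois conjugates for a distinguished pair. -/
theorem conjugate_value_comparison (w : AddValuation L (WithTop Γ))
    [HenselianLocalRing (AddValuation.integersVSR (w.comap (algebraMap K L)))]
    (M : IntermediateField K L) [FiniteDimensional K M] [IsGalois K M]
    (θ a β : L) (hθM : θ ∈ M) (haM : a ∈ M) (hβM : β ∈ M)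
    (hθs : (minpoly K θ).Separable) (has : (minpoly K a).Separable)
    (hβs : (minpoly K β).Separable)
    (hpair : IsDistinguishedPair K w a θ)
    (hβ : w (θ - a) ≤ w (θ - β)) :
    (∀ σ : M ≃ₐ[K] M, w (θ - ((σ ⟨a, haM⟩ : M) : L)) ≤ w (θ - ((σ ⟨β, hβM⟩ : M) : L))) ∧
      (minpoly K β).natDegree • w ((aeval θ) (minpoly K a))
        ≤ (minpoly K a).natDegree • w ((aeval θ) (minpoly K β)) :=
  conjugate_value_comparison_general w M θ a β hθM haM hβM hpair hβ
end
end

section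
/- Let (K,v) be a henselian valued field and θ ∈ K̄ \ K. A sequence [α₀, α₁, …, α_r] of elements of K̄ with 1 = deg_K(α₀) < ⋯ < deg_K(α_r) < deg_K(θ) is a complete distinguished chain for θ if and only if it is a complete Okutsu sequence for θ. -/
open Polynomial

noncomputable section

variable {K L Γ : Type*} [Field K] [Field L] [Algebra K L] [IsAlgClosure K L]
  [AddCommGroup Γ] [LinearOrder Γ] [IsOrderedAddMonoid Γ]

/-- `[α 0, …, α r]` is a *complete Okutsu sequence* for `θ = α (r+1)`. -/
def IsCompleteOkutsuSeq (K : Type*) [Field K] {L Γ : Type*} [Field L] [Algebra K L]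
    [AddCommGroup Γ] [LinearOrder Γ] [IsOrderedAddMonoid Γ] (w : AddValuation L (WithTop Γ))
    (r : ℕ) (α : ℕ → L) (θ : L) : Prop :=
  α (r + 1) = θ ∧ degK K (α 0) = 1 ∧
  (∀ i ≤ r, degK K (α i) < degK K (α (i + 1))) ∧
  ∀ i ≤ r, ∀ β : L,
    (degK K β < degK K (α (i + 1)) → w (θ - β) ≤ w (θ - α i)) ∧
    (degK K β < degK K (α i) → w (θ - β) < w (θ - α i))

/-- `[α 0, …, α r]` is a *complete distinguished chain* for `θ = α (r+1)`. -/
def IsCompleteDistinguishedChain (K : Type*) [Field K] {L Γ : Type*} [Field L] [Algebra K L]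
    [AddCommGroup Γ] [LinearOrder Γ] [IsOrderedAddMonoid Γ] (w : AddValuation L (WithTop Γ))
    (r : ℕ) (α : ℕ → L) (θ : L) : Prop :=
  α (r + 1) = θ ∧ degK K (α 0) = 1 ∧
  (∀ i ≤ r, degK K (α i) < degK K (α (i + 1))) ∧
  ∀ i ≤ r, IsDistinguishedPair K w (α i) (α (i + 1))

/-! Both conditions force `v (θ - α i)` to increase strictly with `i`. Once
`v (θ - α i) < v (θ - α (i+1))`, the ultrametric inequality gives `v (α (i+1) - β) = v (θ - β)`
for every `β` that is no closer than `α i` to `θ` or to `α (i+1)`, so the conditions for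
`(α i, α (i+1))` to be a distinguished pair become exactly the Okutsu conditions at `i`.
For a distinguished chain the monotonicity follows by descending induction from `i = r`,
where `θ - α (r+1) = 0`. -/

theorem AddValuation.map_sub_eq_of_lt_map_sub {R Γ₀ : Type*} [Ring R]
    [LinearOrderedAddCommMonoidWithTop Γ₀] (v : AddValuation R Γ₀) {a b c : R}
    (h : v (b - c) < v (a - b)) : v (a - c) = v (b - c) :=
  v.map_eq_of_lt_sub (by rwa [sub_sub_sub_cancel_right])

section

variable {K L : Type*} [Field K] [Field L] [Algebra K L] (w : AddValuation L (WithTop Γ))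

theorem AddValuation.map_sub_lt_top_of_degK_lt {x y : L} (h : degK K x < degK K y) :
    w (y - x) < ⊤ :=
  lt_top_iff_ne_top.2 (w.ne_top_iff.2 (sub_ne_zero.2 (ne_of_apply_ne (degK K) h.ne')))

theorem isDistinguishedPair_iff_of_lt {θ α α' : L} (hdeg : degK K α < degK K α')
    (hlt : w (θ - α) < w (θ - α')) :
    IsDistinguishedPair K w α α' ↔ ∀ β : L,
      (degK K β < degK K α' → w (θ - β) ≤ w (θ - α)) ∧
      (degK K β < degK K α → w (θ - β) < w (θ - α)) := by
  have hα : w (α' - α) = w (θ - α) :=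
    w.map_sub_eq_of_lt_map_sub (by rwa [w.map_sub_swap α' θ])
  have toθ : ∀ β, w (α' - β) ≤ w (θ - α) → w (θ - β) = w (α' - β) :=
    fun β hβ => w.map_sub_eq_of_lt_map_sub (hβ.trans_lt hlt)
  have toα' : ∀ β, w (θ - β) ≤ w (θ - α) → w (α' - β) = w (θ - β) :=
    fun β hβ => w.map_sub_eq_of_lt_map_sub (by rw [w.map_sub_swap α' θ]; exact hβ.trans_lt hlt)
  constructor
  · rintro ⟨-, ⟨-, hmax⟩, hstrict⟩ β
    have hle : degK K β < degK K α' → w (α' - β) ≤ w (θ - α) :=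
      fun hβ => hα ▸ hmax ⟨β, hβ, rfl⟩
    refine ⟨fun hβ => ?_, fun hβ => ?_⟩
    · rw [toθ β (hle hβ)]
      exact hle hβ
    · have hβα := hα ▸ hstrict β hβ
      rw [toθ β hβα.le]
      exact hβα
  · intro h
    refine ⟨hdeg, ⟨⟨α, hdeg, rfl⟩, ?_⟩, fun β hβ => ?_⟩
    · rintro _ ⟨β, hβ, rfl⟩
      rw [toα' β ((h β).1 hβ), hα]
      exact (h β).1 hβ
    · rw [toα' β ((h β).2 hβ).le, hα]
      exact (h β).2 hβ

variable {w} {r : ℕ} {α : ℕ → L} {θ : L}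

theorem IsCompleteOkutsuSeq.map_sub_lt_map_sub_succ (h : IsCompleteOkutsuSeq K w r α θ)
    {i : ℕ} (hi : i ≤ r) : w (θ - α i) < w (θ - α (i + 1)) := by
  obtain ⟨hθ, -, hdeg, hOk⟩ := h
  rcases hi.lt_or_eq with hi | rfl
  · exact (hOk (i + 1) hi (α i)).2 (hdeg i hi.le)
  · rw [hθ, sub_self, w.map_zero]
    exact w.map_sub_lt_top_of_degK_lt (hθ ▸ hdeg i le_rfl)

theorem IsCompleteDistinguishedChain.map_sub_lt_map_sub_succ
    (h : IsCompleteDistinguishedChain K w r α θ) {i : ℕ} (hi : i ≤ r) :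
    w (θ - α i) < w (θ - α (i + 1)) := by
  obtain ⟨hθ, -, hdeg, hpair⟩ := h
  induction hi using Nat.decreasingInduction with
  | self =>
    rw [hθ, sub_self, w.map_zero]
    exact w.map_sub_lt_top_of_degK_lt (hθ ▸ hdeg r le_rfl)
  | of_succ i hi ih =>
    exact ((isDistinguishedPair_iff_of_lt w (hdeg (i + 1) hi) ih).1 (hpair (i + 1) hi)
      (α i)).2 (hdeg i hi.le)

end

theorem completeDistinguishedChain_iff_completeOkutsuSeq_general (w : AddValuation L (WithTop Γ))
    (r : ℕ) (α : ℕ → L) (θ : L) :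
    IsCompleteDistinguishedChain K w r α θ ↔ IsCompleteOkutsuSeq K w r α θ := by
  constructor
  · intro h
    have ⟨hθ, h0, hdeg, hpair⟩ := h
    exact ⟨hθ, h0, hdeg, fun i hi =>
      (isDistinguishedPair_iff_of_lt w (hdeg i hi) (h.map_sub_lt_map_sub_succ hi)).1 (hpair i hi)⟩
  · intro h
    have ⟨hθ, h0, hdeg, hOk⟩ := h
    exact ⟨hθ, h0, hdeg, fun i hi =>
      (isDistinguishedPair_iff_of_lt w (hdeg i hi) (h.map_sub_lt_map_sub_succ hi)).2 (hOk i hi)⟩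

/-- complete distinguished chains = complete Okutsu sequences. -/
theorem completeDistinguishedChain_iff_completeOkutsuSeq (w : AddValuation L (WithTop Γ))
    [HenselianLocalRing (AddValuation.integersVSR (w.comap (algebraMap K L)))]
    (r : ℕ) (α : ℕ → L) (θ : L) (hθ : θ ∉ Set.range (algebraMap K L)) :
    IsCompleteDistinguishedChain K w r α θ ↔ IsCompleteOkutsuSeq K w r α θ :=
  completeDistinguishedChain_iff_completeOkutsuSeq_general w r α θ
end
end

section
/- Let (K,v) be a henselian valued field and [α₀, …, α_r] a complete Okutsu sequence for θ = α_{r+1}. Then for every 1 ≤ i < r, the truncated sequence [α₀, …, α_i] is a complete Okutsu sequence for α_{i+1}. -/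
open Polynomial

noncomputable section

variable {K L Γ : Type*} [Field K] [Field L] [Algebra K L] [IsAlgClosure K L]
  [AddCommGroup Γ] [LinearOrder Γ] [IsOrderedAddMonoid Γ]

theorem AddValuation.map_sub_eq_of_map_sub_lt {R Γ₀ : Type*} [Ring R]
    [LinearOrderedAddCommMonoidWithTop Γ₀] (v : AddValuation R Γ₀) {θ x y : R}
    (h : v (θ - x) < v (θ - y)) : v (y - x) = v (θ - x) := by
  rw [← sub_sub_sub_cancel_left x y θ, v.map_sub_eq_of_lt_left h]

theorem completeOkutsuSeq_truncation_general (w : AddValuation L (WithTop Γ))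
    (r : ℕ) (α : ℕ → L) (θ : L) (h : IsCompleteOkutsuSeq K w r α θ) :
    ∀ i, 1 ≤ i → i < r → IsCompleteOkutsuSeq K w i α (α (i + 1)) := by
  obtain ⟨-, hdeg₀, hdeg, hokutsu⟩ := h
  intro i _ hir
  have hmono : StrictMonoOn (fun j ↦ degK K (α j)) (Set.Iic (r + 1)) :=
    strictMonoOn_Iic_of_lt_succ fun m hm ↦ hdeg m (Nat.lt_succ_iff.mp hm)
  refine ⟨rfl, hdeg₀, fun j hj ↦ hdeg j (by omega), fun j hj β ↦ ?_⟩
  -- `α (i + 1)` is closer to `θ` than every `α j`, so it may replace `θ` on both sides.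
  have hαj : w (θ - α j) < w (θ - α (i + 1)) :=
    (hokutsu (i + 1) hir (α j)).2
      (hmono (Set.mem_Iic.mpr (by omega)) (Set.mem_Iic.mpr (by omega)) (by omega))
  rw [w.map_sub_eq_of_map_sub_lt hαj]
  constructor
  · intro hβ
    have hle := (hokutsu j (by omega) β).1 hβ
    rwa [w.map_sub_eq_of_map_sub_lt (hle.trans_lt hαj)]
  · intro hβ
    have hlt := (hokutsu j (by omega) β).2 hβ
    rwa [w.map_sub_eq_of_map_sub_lt (hlt.trans hαj)]

/-- truncations of complete Okutsu sequences are complete Okutsu sequences. -/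
theorem completeOkutsuSeq_truncation (w : AddValuation L (WithTop Γ))
    [HenselianLocalRing (AddValuation.integersVSR (w.comap (algebraMap K L)))]
    (r : ℕ) (α : ℕ → L) (θ : L) (h : IsCompleteOkutsuSeq K w r α θ) :
    ∀ i, 1 ≤ i → i < r → IsCompleteOkutsuSeq K w i α (α (i + 1)) :=
  completeOkutsuSeq_truncation_general w r α θ h
end
end
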